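/- The uniform B-spline two-scale relation holds: B_0^p(ξ) = Σ_{j=0}^{p+1} s_j^p · B_0^p(2ξ - j), where s_j^p = 2^{-p} · binomial(p+1, j), for every degree p ≥ 0 and all real ξ. -/

import Mathlib

/-!
Induction on `p`. Substituting the relation for degree `p` into the Cox–de Boor recursion writes
`B_{p+1}(ξ)` as a combination of the values `B_p(2ξ - j)`, and so does the right-hand side of the
relation for degree `p + 1`. The coefficients agree by Pascal's rule together with the absorption
identity `k C(n,k) = (n - k + 1) C(n,k-1)`.
-/

/-- Cardinal B-spline of degree `p`, defined by the Cox–de Boor recursion. -/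
noncomputable def cardinalBSpline : ℕ → ℝ → ℝ
  | 0, ξ => if 0 ≤ ξ ∧ ξ < 1 then 1 else 0
  | (p + 1), ξ =>
      (ξ / (p + 1)) * cardinalBSpline p ξ +
      (((p : ℝ) + 2 - ξ) / (p + 1)) * cardinalBSpline p (ξ - 1)

open Finset

theorem sum_range_mul_choose_eq_sum_range_sub_mul_choose (n : ℕ) (u : ℕ → ℝ) :
    ∑ j ∈ range (n + 1), (j : ℝ) * n.choose j * u j =
      ∑ j ∈ range (n + 1), ((n : ℝ) - j) * n.choose j * u (j + 1) := by
  rw [sum_range_succ', sum_range_succ]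
  simp only [Nat.cast_zero, zero_mul, add_zero, sub_self]
  refine sum_congr rfl fun j hj => ?_
  have hjn : j ≤ n := (mem_range.mp hj).le
  have h := Nat.choose_succ_right_eq n j
  rw [← Nat.cast_inj (R := ℝ)] at h
  push_cast [Nat.cast_sub hjn] at h
  push_cast
  linear_combination u (j + 1) * h

theorem sum_choose_succ_mul_coxDeBoor (n : ℕ) (x : ℝ) (g : ℕ → ℝ) :
    ∑ k ∈ range (n + 2), ((n + 1).choose k : ℝ) * ((x - k) * g k + (n + 1 - x + k) * g (k + 1)) =
      ∑ j ∈ range (n + 1), (n.choose j : ℝ) * (x * g j + (2 * (n + 1) - x) * g (j + 2)) := by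
  -- After Pascal's rule the two sides differ by `∑ C(n,j) (j Δ j - (n - j) Δ (j + 1))`,
  -- where `Δ j = g (j + 1) - g j`; this vanishes by absorption.
  have absorb := sum_range_mul_choose_eq_sum_range_sub_mul_choose n (fun j => g (j + 1) - g j)
  rw [sum_choose_succ_mul (fun k _ => (x - k) * g k + (n + 1 - x + k) * g (k + 1)), ← sum_add_distrib]
  rw [← sub_eq_zero, ← sum_sub_distrib] at absorb ⊢
  rw [← absorb]
  refine sum_congr rfl fun j _ => ?_
  push_cast
  ring

theorem cardinalBSpline_zero_two_scale (ξ : ℝ) :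
    cardinalBSpline 0 ξ = cardinalBSpline 0 (2 * ξ) + cardinalBSpline 0 (2 * ξ - 1) := by
  simp only [cardinalBSpline]
  split_ifs <;> grind

theorem cardinalBSpline_succ (p : ℕ) (x : ℝ) :
    cardinalBSpline (p + 1) x =
      (x * cardinalBSpline p x + (p + 2 - x) * cardinalBSpline p (x - 1)) / (p + 1) := by
  rw [cardinalBSpline]
  ring

/-- The uniform B-spline two-scale relation:
`B_0^p(ξ) = Σ_{j=0}^{p+1} 2^{-p} C(p+1,j) B_0^p(2ξ - j)`. -/
theorem cardinalBSpline_two_scale (p : ℕ) (ξ : ℝ) :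
    cardinalBSpline p ξ =
      ∑ j ∈ Finset.range (p + 2),
        ((2 : ℝ) ^ p)⁻¹ * (Nat.choose (p + 1) j : ℝ) * cardinalBSpline p (2 * ξ - (j : ℝ)) := by
  induction p generalizing ξ with
  | zero => simpa [sum_range_succ] using cardinalBSpline_zero_two_scale ξ
  | succ p ih =>
    set g : ℕ → ℝ := fun j => cardinalBSpline p (2 * ξ - j)
    have g_apply (j : ℕ) : cardinalBSpline p (2 * ξ - j) = g j := rfl
    have g_add_two (j : ℕ) : cardinalBSpline p (2 * (ξ - 1) - j) = g (j + 2) := by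
      simp only [g]; push_cast; ring_nf
    have g_add_one (k : ℕ) : cardinalBSpline p (2 * ξ - k - 1) = g (k + 1) := by
      simp only [g]; push_cast; ring_nf
    have step := sum_choose_succ_mul_coxDeBoor (p + 1) (2 * ξ) g
    simp only [Nat.cast_add, Nat.cast_one, add_assoc, Nat.reduceAdd, one_add_one_eq_two] at step
    calc cardinalBSpline (p + 1) ξ
        = ((2 : ℝ) ^ (p + 1) * (p + 1))⁻¹ * ∑ j ∈ range (p + 2),
            ((p + 1).choose j : ℝ) * (2 * ξ * g j + (2 * (p + 2) - 2 * ξ) * g (j + 2)) := by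
          rw [cardinalBSpline_succ, ih ξ, ih (ξ - 1)]
          simp only [g_apply, g_add_two, mul_sum, ← sum_add_distrib, sum_div]
          refine sum_congr rfl fun j _ => ?_
          field_simp
          ring
      _ = ((2 : ℝ) ^ (p + 1) * (p + 1))⁻¹ * ∑ k ∈ range (p + 3),
            ((p + 2).choose k : ℝ) * ((2 * ξ - k) * g k + (p + 2 - 2 * ξ + k) * g (k + 1)) := by
          rw [step]
      _ = _ := by
          rw [mul_sum]
          refine sum_congr rfl fun k _ => ?_
          rw [cardinalBSpline_succ, g_add_one]
          field_simp
          ring
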